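/- Theorem (Householder): For any k ≥ 1, the Householder iteration of order k, x_{n+1} = x_n + k · (1/f)^{(k-1)}(x_n) / (1/f)^{(k)}(x_n), applied to f(x) = x² + 1 with real initial guess x₀ = cot θ₀, θ₀ ∈ (0, π), satisfies x_n = cot((k+1)ⁿ θ₀) for all n for which the iterates are defined. -/

import Mathlib

/-!
Since `(t² + 1)⁻¹ = Im (t - i)⁻¹`, the `n`-th derivative of `1/f` is
`(-1)ⁿ n! Im (t - i)^{-(n+1)}`. At `t = cot θ` one has `(t - i)⁻¹ = sin θ · e^{iθ}`, so
`(1/f)^{(n)}(cot θ) = (-1)ⁿ n! sinⁿ⁺¹ θ · sin ((n+1)θ)`. Substituting into the Householder step,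
the factorials and signs cancel and `cot α - sin (kα) / (sin α sin ((k+1)α)) = cot ((k+1)α)`
is the identity `cot α - cot β = sin (β - α) / (sin α sin β)`: each step multiplies the angle by `k + 1`.
-/

open Real
open scoped Nat

lemma ofReal_sub_ne_zero {z : ℂ} (hz : z.im ≠ 0) (x : ℝ) : (x : ℂ) - z ≠ 0 := by
  intro h
  exact hz (by simpa using congrArg Complex.im h)

lemma hasDerivAt_sub_inv_pow {z x : ℂ} (hx : x - z ≠ 0) (n : ℕ) :
    HasDerivAt (fun w : ℂ => (w - z)⁻¹ ^ (n + 1)) (-(n + 1) * (x - z)⁻¹ ^ (n + 2)) x := by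
  refine (((hasDerivAt_id x).sub_const z).inv hx |>.fun_pow (n + 1)).congr_deriv ?_
  simp only [id, Pi.inv_apply, Nat.add_sub_cancel, Nat.cast_add, Nat.cast_one, pow_add]
  field_simp

lemma hasDerivAt_im_ofReal_sub_inv_pow {z : ℂ} (hz : z.im ≠ 0) (n : ℕ) (x : ℝ) :
    HasDerivAt (fun t : ℝ => (((t : ℂ) - z)⁻¹ ^ (n + 1)).im)
      (-(n + 1) * (((x : ℂ) - z)⁻¹ ^ (n + 2)).im) x := by
  have h := (hasDerivAt_sub_inv_pow (ofReal_sub_ne_zero hz x) n).comp_ofReal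
  simpa [Function.comp_def, Complex.mul_im] using Complex.imCLM.hasFDerivAt.comp_hasDerivAt x h

lemma iteratedDeriv_im_ofReal_sub_inv {z : ℂ} (hz : z.im ≠ 0) (n : ℕ) :
    iteratedDeriv n (fun t : ℝ => (((t : ℂ) - z)⁻¹).im)
      = fun x : ℝ => (-1) ^ n * n ! * (((x : ℂ) - z)⁻¹ ^ (n + 1)).im := by
  induction n with
  | zero => simp
  | succ n ih =>
    ext x
    rw [iteratedDeriv_succ, ih, ((hasDerivAt_im_ofReal_sub_inv_pow hz n x).const_mul _).deriv,
      Nat.factorial_succ]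
    push_cast
    ring

lemma inv_sq_add_one_eq_im (t : ℝ) : (t ^ 2 + 1)⁻¹ = (((t : ℂ) - Complex.I)⁻¹).im := by
  simp [Complex.inv_im, Complex.normSq_apply]
  ring

lemma iteratedDeriv_inv_sq_add_one (n : ℕ) (x : ℝ) :
    iteratedDeriv n (fun t : ℝ => (t ^ 2 + 1)⁻¹) x
      = (-1) ^ n * n ! * (((x : ℂ) - Complex.I)⁻¹ ^ (n + 1)).im := by
  simp only [inv_sq_add_one_eq_im, iteratedDeriv_im_ofReal_sub_inv (z := Complex.I) (by simp)]

lemma inv_ofReal_cot_sub_I {θ : ℝ} (hθ : sin θ ≠ 0) :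
    ((cot θ : ℂ) - Complex.I)⁻¹ = sin θ * Complex.exp (θ * Complex.I) := by
  apply inv_eq_of_mul_eq_one_right
  rw [cot_eq_cos_div_sin, Complex.exp_mul_I]
  push_cast
  have hθ' : Complex.sin θ ≠ 0 := by exact_mod_cast hθ
  field_simp
  linear_combination Complex.sin_sq_add_cos_sq (θ : ℂ) - Complex.sin (θ : ℂ) ^ 2 * Complex.I_sq

lemma iteratedDeriv_inv_sq_add_one_cot (n : ℕ) {θ : ℝ} (hθ : sin θ ≠ 0) :
    iteratedDeriv n (fun t : ℝ => (t ^ 2 + 1)⁻¹) (cot θ)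
      = (-1) ^ n * n ! * sin θ ^ (n + 1) * sin ((n + 1) * θ) := by
  rw [iteratedDeriv_inv_sq_add_one, inv_ofReal_cot_sub_I hθ, mul_pow, ← Complex.exp_nat_mul,
    ← Complex.ofReal_pow, Complex.im_ofReal_mul]
  have hangle : ((n + 1 : ℕ) : ℂ) * (θ * Complex.I) = (((n + 1) * θ : ℝ) : ℂ) * Complex.I := by
    push_cast
    ring
  rw [hangle, Complex.exp_ofReal_mul_I_im]
  ring

lemma cot_sub_cot {α β : ℝ} (hα : sin α ≠ 0) (hβ : sin β ≠ 0) :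
    cot α - cot β = sin (β - α) / (sin α * sin β) := by
  rw [cot_eq_cos_div_sin, cot_eq_cos_div_sin, sin_sub]
  field_simp

lemma householder_step_cot (k : ℕ) {α : ℝ} (hα : sin α ≠ 0) (hkα : sin ((k + 1) * α) ≠ 0) :
    cot α + k * iteratedDeriv (k - 1) (fun t : ℝ => (t ^ 2 + 1)⁻¹) (cot α) /
        iteratedDeriv k (fun t : ℝ => (t ^ 2 + 1)⁻¹) (cot α)
      = cot ((k + 1) * α) := by
  cases k with
  -- for `k = 0` the truncated `k - 1` is harmless: the step is `cot α + 0 * …`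
  | zero => simp
  | succ m =>
    rw [Nat.add_sub_cancel, iteratedDeriv_inv_sq_add_one_cot m hα,
      iteratedDeriv_inv_sq_add_one_cot (m + 1) hα, Nat.factorial_succ]
    push_cast at hkα ⊢
    have hm : (m ! : ℝ) ≠ 0 := by positivity
    have hratio : ((m : ℝ) + 1) * ((-1) ^ m * m ! * sin α ^ (m + 1) * sin ((m + 1) * α)) /
        ((-1) ^ (m + 1) * ((m + 1) * m !) * sin α ^ (m + 1 + 1) * sin ((m + 1 + 1) * α))
        = -(sin ((m + 1) * α) / (sin α * sin ((m + 1 + 1) * α))) := by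
      field_simp
      ring
    have hcot := cot_sub_cot hα hkα
    rw [show ((m : ℝ) + 1 + 1) * α - α = (m + 1) * α by ring] at hcot
    rw [hratio]
    linarith

theorem householder_orbit_cot_general (k : ℕ) (θ₀ : ℝ) (x : ℕ → ℝ)
    (h0 : x 0 = Real.cot θ₀)
    (hrec : ∀ n, x (n + 1) =
      x n + (k : ℝ) * iteratedDeriv (k - 1) (fun t : ℝ => (t ^ 2 + 1)⁻¹) (x n) /
        iteratedDeriv k (fun t : ℝ => (t ^ 2 + 1)⁻¹) (x n))
    (hdef : ∀ n, Real.sin ((k + 1 : ℝ) ^ n * θ₀) ≠ 0) :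
    ∀ n, x n = Real.cot ((k + 1 : ℝ) ^ n * θ₀) := by
  intro n
  induction n with
  | zero => simpa using h0
  | succ n ih =>
    have hangle : ((k + 1 : ℝ) ^ (n + 1) * θ₀) = (k + 1) * ((k + 1) ^ n * θ₀) := by ring
    rw [hrec n, ih, hangle, householder_step_cot k (hdef n) (hangle ▸ hdef (n + 1))]

/-- Theorem (Householder): for any `k ≥ 1`, the Householder iteration of
order `k`, `x_{n+1} = x_n + k (1/f)^{(k-1)}(x_n) / (1/f)^{(k)}(x_n)`, applied
to `f(x) = x² + 1` with real initial guess `x₀ = cot θ₀`, `θ₀ ∈ (0, π)`,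
satisfies `x_n = cot((k+1)ⁿ θ₀)` for all `n` for which the iterates are
defined. -/
theorem householder_orbit_cot (k : ℕ) (hk : 1 ≤ k) (θ₀ : ℝ)
    (hθ : θ₀ ∈ Set.Ioo 0 Real.pi) (x : ℕ → ℝ)
    (h0 : x 0 = Real.cot θ₀)
    (hne : ∀ n, iteratedDeriv k (fun t : ℝ => (t ^ 2 + 1)⁻¹) (x n) ≠ 0)
    (hrec : ∀ n, x (n + 1) =
      x n + (k : ℝ) * iteratedDeriv (k - 1) (fun t : ℝ => (t ^ 2 + 1)⁻¹) (x n) /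
        iteratedDeriv k (fun t : ℝ => (t ^ 2 + 1)⁻¹) (x n))
    (hdef : ∀ n, Real.sin ((k + 1 : ℝ) ^ n * θ₀) ≠ 0) :
    ∀ n, x n = Real.cot ((k + 1 : ℝ) ^ n * θ₀) :=
  householder_orbit_cot_general k θ₀ x h0 hrec hdef
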